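/- arXiv:2306.11188 — 2 statements merged into one kernel-verified Lean document; each statement's English description precedes it below -/
import Mathlib

section
/- Let X and Y be real random variables with finite positive variance, and suppose X is bi-atomic. If (X,Y) is quasi-independent, then X and Y are independent. In particular, (X,Y) ∈ IC_0 if and only if X and Y are independent. -/
open MeasureTheory ProbabilityTheory

variable {Ω : Type*} [MeasurableSpace Ω]

noncomputable def cov (μ : Measure Ω) (X Y : Ω → ℝ) : ℝ :=
  ∫ ω, (X ω - ∫ a, X a ∂μ) * (Y ω - ∫ a, Y a ∂μ) ∂μ

noncomputable def corr (μ : Measure Ω) (X Y : Ω → ℝ) : ℝ :=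
  cov μ X Y / Real.sqrt (variance X μ * variance Y μ)

def Admissible (μ : Measure Ω) (X Y : Ω → ℝ) (g : ℝ → ℝ) : Prop :=
  Measurable g ∧ MemLp (g ∘ X) 2 μ ∧ MemLp (g ∘ Y) 2 μ ∧
    0 < variance (g ∘ X) μ ∧ 0 < variance (g ∘ Y) μ

def IC (μ : Measure Ω) (X Y : Ω → ℝ) (r : ℝ) : Prop :=
  corr μ X Y = r ∧ ∀ g : ℝ → ℝ, Admissible μ X Y g → corr μ (g ∘ X) (g ∘ Y) = r

/-- Quasi-independence: `H(x,y) + H(y,x) = F(x)G(y) + F(y)G(x)` for all `x, y`. -/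
def QuasiIndep (μ : Measure Ω) (X Y : Ω → ℝ) : Prop :=
  ∀ x y : ℝ,
    (μ {ω | X ω ≤ x ∧ Y ω ≤ y}).toReal + (μ {ω | X ω ≤ y ∧ Y ω ≤ x}).toReal =
      (μ {ω | X ω ≤ x}).toReal * (μ {ω | Y ω ≤ y}).toReal +
        (μ {ω | X ω ≤ y}).toReal * (μ {ω | Y ω ≤ x}).toReal

/-!
Write `k(x, y) = H(x, y) - F(x) G(y) = Cov(1{X ≤ x}, 1{Y ≤ y})`, so that quasi-independence says
`k(x, y) + k(y, x) = 0`. As `X` only takes the values `a < b`, the indicator `1{X ≤ x}` is a.s.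
`0`, `1` or `1{X ≤ a}`, so every `k(x, y)` is `0` or `k(a, y)`. Quasi-independence at `(a, a)`
gives `k(a, a) = 0`, hence `k(y, a) = 0` for all `y`, hence `k(a, y) = 0` by quasi-independence
at `(a, y)`. So `H = F G`, i.e. `X` and `Y` are independent.

For `IC_0`, apply invariance to `g_t = 1(-∞, x] + t 1(-∞, y]`: the covariance of `g_t(X)` and
`g_t(Y)` is a quadratic polynomial in `t` with linear coefficient `k(x, y) + k(y, x)`, and it
vanishes wherever the variance polynomials of `g_t(X)` and `g_t(Y)` do not. Unless one of these is
identically zero (and then both terms of the sum vanish), the product of the three polynomials is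
zero, so the covariance polynomial is zero and `(X, Y)` is quasi-independent.
-/

open Set Filter

section Covariance

variable {μ : Measure Ω} {U V W Z : Ω → ℝ}

lemma cov_eq_covariance (U W : Ω → ℝ) : cov μ U W = cov[U, W; μ] := rfl

lemma covariance_congr_left (h : U =ᵐ[μ] V) : cov[U, W; μ] = cov[V, W; μ] := by
  rw [covariance, covariance, integral_congr_ae h]
  refine integral_congr_ae ?_
  filter_upwards [h] with ω hω
  rw [hω]

lemma covariance_eq_zero_of_variance_eq_zero_left [IsFiniteMeasure μ] (hU : MemLp U 2 μ)
    (h : Var[U; μ] = 0) (W : Ω → ℝ) : cov[U, W; μ] = 0 := by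
  refine integral_eq_zero_of_ae ?_
  filter_upwards [ae_eq_integral_of_variance_eq_zero hU h] with ω hω
  simp [hω]

lemma covariance_eq_zero_of_variance_eq_zero_right [IsFiniteMeasure μ] (hW : MemLp W 2 μ)
    (h : Var[W; μ] = 0) (U : Ω → ℝ) : cov[U, W; μ] = 0 := by
  rw [covariance_comm, covariance_eq_zero_of_variance_eq_zero_left hW h]

lemma covariance_eq_zero_of_corr_eq_zero (h : corr μ U W = 0) (hU : 0 < Var[U; μ])
    (hW : 0 < Var[W; μ]) : cov[U, W; μ] = 0 := by
  rw [corr, div_eq_zero_iff] at h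
  exact h.resolve_right (Real.sqrt_pos.2 (mul_pos hU hW)).ne'

lemma corr_eq_zero_of_indepFun [IsFiniteMeasure μ] (h : IndepFun U W μ) (hU : MemLp U 2 μ)
    (hW : MemLp W 2 μ) : corr μ U W = 0 := by
  rw [corr, cov_eq_covariance, h.covariance_eq_zero hU hW, zero_div]

end Covariance

section CovariancePoly

open Polynomial

variable {μ : Measure Ω} {U V W Z : Ω → ℝ}

noncomputable def covariancePoly (μ : Measure Ω) (U V W Z : Ω → ℝ) : ℝ[X] :=
  C cov[U, W; μ] + C (cov[U, Z; μ] + cov[V, W; μ]) * X + C cov[V, Z; μ] * X ^ 2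

lemma eval_covariancePoly [IsFiniteMeasure μ] (hU : MemLp U 2 μ) (hV : MemLp V 2 μ)
    (hW : MemLp W 2 μ) (hZ : MemLp Z 2 μ) (t : ℝ) :
    (covariancePoly μ U V W Z).eval t = cov[U + t • V, W + t • Z; μ] := by
  rw [covariance_add_left hU (hV.const_smul t) (hW.add (hZ.const_smul t)),
    covariance_add_right hU hW (hZ.const_smul t),
    covariance_add_right (hV.const_smul t) hW (hZ.const_smul t),
    covariance_smul_left, covariance_smul_left, covariance_smul_right, covariance_smul_right]
  simp only [covariancePoly, eval_add, eval_mul, eval_C, eval_X, eval_pow]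
  ring

lemma covariancePoly_self_ne_zero [IsFiniteMeasure μ] (hU : AEMeasurable U μ)
    (hV : AEMeasurable V μ) (h : Var[U; μ] ≠ 0 ∨ Var[V; μ] ≠ 0) :
    covariancePoly μ U V U V ≠ 0 := by
  intro h0
  have h0' := congrArg (coeff · 0) h0
  have h2 := congrArg (coeff · 2) h0
  simp [covariancePoly, coeff_X, covariance_self hU, covariance_self hV] at h0' h2
  tauto

lemma covariance_add_covariance_eq_zero_of_forall [IsFiniteMeasure μ] (hU : MemLp U 2 μ)
    (hV : MemLp V 2 μ) (hW : MemLp W 2 μ) (hZ : MemLp Z 2 μ)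
    (hUV : Var[U; μ] ≠ 0 ∨ Var[V; μ] ≠ 0) (hWZ : Var[W; μ] ≠ 0 ∨ Var[Z; μ] ≠ 0)
    (h : ∀ t : ℝ, Var[U + t • V; μ] ≠ 0 → Var[W + t • Z; μ] ≠ 0 →
      cov[U + t • V, W + t • Z; μ] = 0) :
    cov[U, Z; μ] + cov[V, W; μ] = 0 := by
  have hprod : covariancePoly μ U V W Z *
      (covariancePoly μ U V U V * covariancePoly μ W Z W Z) = 0 := by
    refine Polynomial.funext fun t => ?_
    simp only [eval_mul, eval_zero, eval_covariancePoly hU hV hW hZ,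
      eval_covariancePoly hU hV hU hV, eval_covariancePoly hW hZ hW hZ,
      covariance_self (hU.add (hV.const_smul t)).aemeasurable,
      covariance_self (hW.add (hZ.const_smul t)).aemeasurable]
    by_cases hP : Var[U + t • V; μ] = 0
    · simp [hP]
    by_cases hQ : Var[W + t • Z; μ] = 0
    · simp [hQ]
    simp [h t hP hQ]
  have hR := (mul_eq_zero.mp hprod).resolve_right <| mul_ne_zero
    (covariancePoly_self_ne_zero hU.aemeasurable hV.aemeasurable hUV)
    (covariancePoly_self_ne_zero hW.aemeasurable hZ.aemeasurable hWZ)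
  simpa [covariancePoly, coeff_X] using congrArg (coeff · 1) hR

end CovariancePoly

section CdfCov

variable {μ : Measure Ω} {X Y : Ω → ℝ}

noncomputable def cdfCov (μ : Measure Ω) (X Y : Ω → ℝ) (x y : ℝ) : ℝ :=
  cov[(Iic x).indicator (1 : ℝ → ℝ) ∘ X, (Iic y).indicator (1 : ℝ → ℝ) ∘ Y; μ]

lemma memLp_indicator_Iic_comp [IsFiniteMeasure μ] (hX : Measurable X) (x : ℝ) :
    MemLp ((Iic x).indicator (1 : ℝ → ℝ) ∘ X) 2 μ :=
  memLp_indicator_const 2 (hX measurableSet_Iic) 1 (Or.inr (measure_ne_top μ _))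

lemma cdfCov_eq [IsProbabilityMeasure μ] (hX : Measurable X) (hY : Measurable Y) (x y : ℝ) :
    cdfCov μ X Y x y = μ.real {ω | X ω ≤ x ∧ Y ω ≤ y} -
      μ.real {ω | X ω ≤ x} * μ.real {ω | Y ω ≤ y} := by
  have hSx : MeasurableSet {ω | X ω ≤ x} := hX measurableSet_Iic
  have hTy : MeasurableSet {ω | Y ω ≤ y} := hY measurableSet_Iic
  have hind (Z : Ω → ℝ) (z : ℝ) :
      (Iic z).indicator (1 : ℝ → ℝ) ∘ Z = {ω | Z ω ≤ z}.indicator 1 := rfl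
  rw [cdfCov, covariance_eq_sub (memLp_indicator_Iic_comp hX x) (memLp_indicator_Iic_comp hY y),
    hind, hind, ← inter_indicator_one, integral_indicator_one (hSx.inter hTy),
    integral_indicator_one hSx, integral_indicator_one hTy]
  rfl

lemma quasiIndep_iff_cdfCov [IsProbabilityMeasure μ] (hX : Measurable X) (hY : Measurable Y) :
    QuasiIndep μ X Y ↔ ∀ x y, cdfCov μ X Y x y + cdfCov μ X Y y x = 0 := by
  refine forall₂_congr fun x y => ?_
  simp only [cdfCov_eq hX hY, measureReal_def]
  constructor <;> intro h <;> linarith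

end CdfCov

section QuasiIndep

variable {μ : Measure Ω} [IsProbabilityMeasure μ] {X Y : Ω → ℝ}

lemma quasiIndep_of_forall_corr_eq_zero (hX : Measurable X) (hY : Measurable Y)
    (h : ∀ g : ℝ → ℝ, Admissible μ X Y g → corr μ (g ∘ X) (g ∘ Y) = 0) :
    QuasiIndep μ X Y := by
  rw [quasiIndep_iff_cdfCov hX hY]
  intro x y
  have hU := memLp_indicator_Iic_comp (μ := μ) hX x
  have hV := memLp_indicator_Iic_comp (μ := μ) hX y
  have hW := memLp_indicator_Iic_comp (μ := μ) hY x
  have hZ := memLp_indicator_Iic_comp (μ := μ) hY y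
  by_cases hUV : Var[(Iic x).indicator (1 : ℝ → ℝ) ∘ X; μ] ≠ 0 ∨
      Var[(Iic y).indicator (1 : ℝ → ℝ) ∘ X; μ] ≠ 0
  swap
  · push Not at hUV
    simp [cdfCov, covariance_eq_zero_of_variance_eq_zero_left hU hUV.1,
      covariance_eq_zero_of_variance_eq_zero_left hV hUV.2]
  by_cases hWZ : Var[(Iic x).indicator (1 : ℝ → ℝ) ∘ Y; μ] ≠ 0 ∨
      Var[(Iic y).indicator (1 : ℝ → ℝ) ∘ Y; μ] ≠ 0
  swap
  · push Not at hWZ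
    simp [cdfCov, covariance_eq_zero_of_variance_eq_zero_right hW hWZ.1,
      covariance_eq_zero_of_variance_eq_zero_right hZ hWZ.2]
  refine covariance_add_covariance_eq_zero_of_forall hU hV hW hZ hUV hWZ fun t hvX hvY => ?_
  let g : ℝ → ℝ := (Iic x).indicator 1 + t • (Iic y).indicator 1
  have hg : Admissible μ X Y g :=
    ⟨(measurable_one.indicator measurableSet_Iic).add
      ((measurable_one.indicator measurableSet_Iic).const_smul t),
      hU.add (hV.const_smul t), hW.add (hZ.const_smul t),
      (variance_nonneg _ _).lt_of_ne' hvX, (variance_nonneg _ _).lt_of_ne' hvY⟩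
  exact covariance_eq_zero_of_corr_eq_zero (h g hg) hg.2.2.2.1 hg.2.2.2.2

end QuasiIndep

section Biatomic

variable {μ : Measure Ω} {X Y : Ω → ℝ} {a b : ℝ}

lemma ae_eq_or_eq_of_measure_add_eq_one [IsProbabilityMeasure μ] (hX : Measurable X)
    (hab : a ≠ b) (hsum : μ {ω | X ω = a} + μ {ω | X ω = b} = 1) : ∀ᵐ ω ∂μ, X ω = a ∨ X ω = b := by
  have hA : MeasurableSet {ω | X ω = a} := hX (measurableSet_singleton a)
  have hB : MeasurableSet {ω | X ω = b} := hX (measurableSet_singleton b)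
  have hdisj : Disjoint {ω | X ω = a} {ω | X ω = b} :=
    disjoint_left.2 fun ω ha hb => hab (ha.symm.trans hb)
  rw [← measure_union hdisj hB, ← prob_compl_eq_zero_iff (hA.union hB)] at hsum
  exact measure_mono_null (fun ω hω => by simpa [not_or] using hω) hsum

lemma indicator_Iic_comp_ae_eq (hab : a < b) (hXab : ∀ᵐ ω ∂μ, X ω = a ∨ X ω = b) (x : ℝ) :
    (Iic x).indicator (1 : ℝ → ℝ) ∘ X =ᵐ[μ] 0 ∨ (Iic x).indicator (1 : ℝ → ℝ) ∘ X =ᵐ[μ] 1 ∨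
      (Iic x).indicator (1 : ℝ → ℝ) ∘ X =ᵐ[μ] (Iic a).indicator 1 ∘ X := by
  rcases lt_or_ge x a with hxa | hax
  · left
    filter_upwards [hXab] with ω hω
    rcases hω with hω | hω <;> simp [hω, hxa, hxa.trans hab]
  rcases lt_or_ge x b with hxb | hbx
  · right; right
    filter_upwards [hXab] with ω hω
    rcases hω with hω | hω <;> simp [hω, hax, hxb, hab]
  · right; left
    filter_upwards [hXab] with ω hω
    rcases hω with hω | hω <;> simp [hω, hbx, hab.le.trans hbx]

lemma cdfCov_eq_zero_or_eq [IsProbabilityMeasure μ] (hab : a < b)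
    (hXab : ∀ᵐ ω ∂μ, X ω = a ∨ X ω = b) (x y : ℝ) :
    cdfCov μ X Y x y = 0 ∨ cdfCov μ X Y x y = cdfCov μ X Y a y := by
  rcases indicator_Iic_comp_ae_eq hab hXab x with h | h | h
  · left; rw [cdfCov, covariance_congr_left h, covariance_zero_left]
  · left; rw [cdfCov, covariance_congr_left h]; exact covariance_const_left 1
  · right; rw [cdfCov, covariance_congr_left h]; rfl

lemma cdfCov_eq_zero_of_quasiIndep [IsProbabilityMeasure μ] (hX : Measurable X)
    (hY : Measurable Y) (hab : a < b) (hXab : ∀ᵐ ω ∂μ, X ω = a ∨ X ω = b)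
    (hQI : QuasiIndep μ X Y) (x y : ℝ) : cdfCov μ X Y x y = 0 := by
  rw [quasiIndep_iff_cdfCov hX hY] at hQI
  have haa : cdfCov μ X Y a a = 0 := by linarith [hQI a a]
  have hza (z : ℝ) : cdfCov μ X Y z a = 0 :=
    (cdfCov_eq_zero_or_eq hab hXab z a).elim id (·.trans haa)
  have haz (z : ℝ) : cdfCov μ X Y a z = 0 := by linarith [hQI a z, hza z]
  exact (cdfCov_eq_zero_or_eq hab hXab x y).elim id (·.trans (haz y))

end Biatomic

section Independence

variable {μ : Measure Ω} [IsProbabilityMeasure μ] {X Y : Ω → ℝ}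

lemma comap_eq_generateFrom_preimage_Iic {α : Type*} (X : α → ℝ) :
    MeasurableSpace.comap X inferInstance =
      MeasurableSpace.generateFrom (preimage X '' range Iic) := by
  rw [← MeasurableSpace.comap_generateFrom, ← borel_eq_generateFrom_Iic]
  rfl

lemma indepFun_of_cdfCov_eq_zero (hX : Measurable X) (hY : Measurable Y)
    (h : ∀ x y, cdfCov μ X Y x y = 0) : IndepFun X Y μ := by
  rw [IndepFun_iff_Indep]
  refine IndepSets.indep hX.comap_le hY.comap_le (isPiSystem_Iic.comap X) (isPiSystem_Iic.comap Y)
    (comap_eq_generateFrom_preimage_Iic X) (comap_eq_generateFrom_preimage_Iic Y) ?_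
  rw [IndepSets_iff]
  rintro _ _ ⟨_, ⟨x, rfl⟩, rfl⟩ ⟨_, ⟨y, rfl⟩, rfl⟩
  have hxy := h x y
  rw [cdfCov_eq hX hY, sub_eq_zero] at hxy
  rw [← ENNReal.toReal_eq_toReal_iff' (measure_ne_top _ _) (by finiteness), ENNReal.toReal_mul]
  exact hxy

lemma ic_zero_of_indepFun (h : IndepFun X Y μ) (hX : MemLp X 2 μ) (hY : MemLp Y 2 μ) : IC μ X Y 0 :=
  ⟨corr_eq_zero_of_indepFun h hX hY,
    fun _ hg => corr_eq_zero_of_indepFun (h.comp hg.1 hg.1) hg.2.1 hg.2.2.1⟩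

end Independence

theorem quasiIndep_biatomic_indep_general
    (μ : Measure Ω) [IsProbabilityMeasure μ] (X Y : Ω → ℝ)
    (hXm : Measurable X) (hYm : Measurable Y)
    (hX2 : MemLp X 2 μ) (hY2 : MemLp Y 2 μ)
    (a b : ℝ) (hab : a < b)
    (hsum : μ {ω | X ω = a} + μ {ω | X ω = b} = 1) :
    (QuasiIndep μ X Y → IndepFun X Y μ) ∧ (IC μ X Y 0 ↔ IndepFun X Y μ) := by
  have hX := ae_eq_or_eq_of_measure_add_eq_one hXm hab.ne hsum
  have indep_of_quasiIndep (hQI : QuasiIndep μ X Y) : IndepFun X Y μ :=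
    indepFun_of_cdfCov_eq_zero hXm hYm (cdfCov_eq_zero_of_quasiIndep hXm hYm hab hX hQI)
  exact ⟨indep_of_quasiIndep,
    fun hIC => indep_of_quasiIndep (quasiIndep_of_forall_corr_eq_zero hXm hYm hIC.2),
    fun h => ic_zero_of_indepFun h hX2 hY2⟩

/-- If `X` is bi-atomic and `(X,Y)` is quasi-independent, then `X` and `Y`
are independent; in particular `(X,Y) ∈ IC_0` iff `X` and `Y` are independent. -/
theorem quasiIndep_biatomic_indep
    (μ : Measure Ω) [IsProbabilityMeasure μ] (X Y : Ω → ℝ)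
    (hXm : Measurable X) (hYm : Measurable Y)
    (hX2 : MemLp X 2 μ) (hY2 : MemLp Y 2 μ)
    (hvX : 0 < variance X μ) (hvY : 0 < variance Y μ)
    (a b : ℝ) (hab : a < b)
    (ha : 0 < μ {ω | X ω = a}) (hb : 0 < μ {ω | X ω = b})
    (hsum : μ {ω | X ω = a} + μ {ω | X ω = b} = 1) :
    (QuasiIndep μ X Y → IndepFun X Y μ) ∧ (IC μ X Y 0 ↔ IndepFun X Y μ) :=
  quasiIndep_biatomic_indep_general μ X Y hXm hYm hX2 hY2 a b hab hsum
end

section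
/- Let x₁ < x₂ < x₃ be three distinct reals, let Y take each of the values x₁, x₂, x₃ with positive probability and P(Y ∈ {x₁,x₂,x₃}) = 1, and let X satisfy P(X ∈ {x₁,x₂,x₃}) = 1 (so Supp(X) ⊆ Supp(Y) = {x₁,x₂,x₃}). If (X,Y) ∈ IC, then X and Y have the same distribution, or Corr(X,Y) = 0. -/
/-! For `g_t = t • 𝟙_{x₁} + 𝟙_{x₂}` the covariance of `g_t(X), g_t(Y)` and their variances are
quadratics `f, a, b` in `t`, and invariance of the correlation gives `f² = r² a b` (trivially so
where a variance vanishes). All three atoms of `Y` are charged, so `b` has no real root; being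
irreducible it divides `f`, whence `a = c b`. Comparing coefficients, every product `pᵢ pⱼ` of
atoms of `X` is `c` times the corresponding product for `Y`, which forces `p = q` unless `c = 0`;
and `c = 0` would give `Var X = 0`, because on its support `X` is an affine function of
`g_t(X)` for a suitable `t`. -/

open MeasureTheory ProbabilityTheory

variable {Ω : Type*} [MeasurableSpace Ω]

namespace Polynomial

theorem exists_eq_C_mul_of_sq_eq_mul {K : Type*} [Field K] {F A B : K[X]}
    (hB : Irreducible B) (hF : F.natDegree ≤ B.natDegree) (h : F ^ 2 = A * B) :
    ∃ c, A = C c * B := by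
  obtain ⟨G, rfl⟩ : B ∣ F := hB.prime.dvd_of_dvd_pow (h ▸ dvd_mul_left B A)
  obtain ⟨g, rfl⟩ : ∃ g, G = C g := by
    rcases eq_or_ne G 0 with hG | hG
    · exact ⟨0, by simp [hG]⟩
    · rw [natDegree_mul hB.ne_zero hG] at hF
      exact ⟨_, eq_C_of_natDegree_eq_zero (by omega)⟩
  refine ⟨g ^ 2, mul_right_cancel₀ hB.ne_zero ?_⟩
  rw [← h, C_pow]
  ring

theorem irreducible_of_natDegree_eq_two_of_forall_pos {B : ℝ[X]}
    (hB : B.natDegree = 2) (hpos : ∀ t, 0 < B.eval t) : Irreducible B :=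
  irreducible_of_degree_le_three_of_not_isRoot (by simp [hB]) fun t ht => (hpos t).ne' ht

end Polynomial

open Polynomial in
theorem exists_coeffs_eq_mul_of_sq_eq_mul {f₂ f₁ f₀ a₂ a₁ a₀ b₂ b₁ b₀ : ℝ} (hb₂ : b₂ ≠ 0)
    (hb : ∀ t, 0 < b₂ * t ^ 2 + b₁ * t + b₀)
    (h : ∀ t, (f₂ * t ^ 2 + f₁ * t + f₀) ^ 2 =
      (a₂ * t ^ 2 + a₁ * t + a₀) * (b₂ * t ^ 2 + b₁ * t + b₀)) :
    ∃ c, a₂ = c * b₂ ∧ a₁ = c * b₁ ∧ a₀ = c * b₀ := by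
  have hdeg : (C b₂ * X ^ 2 + C b₁ * X + C b₀).natDegree = 2 := natDegree_quadratic hb₂
  have hsq : (C f₂ * X ^ 2 + C f₁ * X + C f₀) ^ 2 =
      (C a₂ * X ^ 2 + C a₁ * X + C a₀) * (C b₂ * X ^ 2 + C b₁ * X + C b₀) :=
    Polynomial.funext fun t => by simpa using h t
  obtain ⟨c, hc⟩ := exists_eq_C_mul_of_sq_eq_mul
    (irreducible_of_natDegree_eq_two_of_forall_pos hdeg (by simpa using hb))
    (by rw [hdeg]; exact natDegree_quadratic_le) hsq
  refine ⟨c, ?_, ?_, ?_⟩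
  · simpa using congrArg (coeff · 2) hc
  · simpa using congrArg (coeff · 1) hc
  · simpa using congrArg (coeff · 0) hc

theorem eq_of_atom_coeffs_eq_mul {p₁ p₂ q₁ q₂ c : ℝ} (hp₁ : 0 ≤ p₁) (hp₂ : 0 ≤ p₂)
    (hp : p₁ + p₂ ≤ 1) (hq₁ : 0 < q₁) (hq₂ : 0 < q₂) (hq : q₁ + q₂ < 1) (hc : c ≠ 0)
    (h₁ : p₁ - p₁ ^ 2 = c * (q₁ - q₁ ^ 2)) (h₁₂ : p₁ * p₂ = c * (q₁ * q₂))
    (h₂ : p₂ - p₂ ^ 2 = c * (q₂ - q₂ ^ 2)) :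
    p₁ = q₁ ∧ p₂ = q₂ := by
  obtain ⟨p₃, hp₃⟩ : ∃ p₃, p₃ = 1 - p₁ - p₂ := ⟨_, rfl⟩
  obtain ⟨q₃, hq₃⟩ : ∃ q₃, q₃ = 1 - q₁ - q₂ := ⟨_, rfl⟩
  have h₁₃ : p₁ * p₃ = c * (q₁ * q₃) := by rw [hp₃, hq₃]; linear_combination h₁ - h₁₂
  have h₂₃ : p₂ * p₃ = c * (q₂ * q₃) := by rw [hp₃, hq₃]; linear_combination h₂ - h₁₂
  have hc : 0 < c := by
    refine lt_of_le_of_ne ?_ hc.symm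
    exact nonneg_of_mul_nonneg_left (h₁₂ ▸ mul_nonneg hp₁ hp₂) (mul_pos hq₁ hq₂)
  -- `pᵢ² = c qᵢ²`: multiply two of the pairwise identities and divide by the third
  have hsq : ∀ {pi pj pk qi qj qk : ℝ}, 0 ≤ pi → 0 ≤ qi → 0 < qj * qk →
      pi * pj = c * (qi * qj) → pi * pk = c * (qi * qk) → pj * pk = c * (qj * qk) →
      pi = √c * qi := by
    intro pi pj pk qi qj qk hpi hqi hjk hij hik hjk'
    have : c * (qj * qk) * pi ^ 2 = c * (qj * qk) * (√c * qi) ^ 2 := by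
      rw [mul_pow, Real.sq_sqrt hc.le]
      linear_combination pi * pk * hij + c * qi * qj * hik - pi ^ 2 * hjk'
    exact (pow_left_inj₀ hpi (by positivity) two_ne_zero).mp
      (mul_left_cancel₀ (mul_pos hc hjk).ne' this)
  have hq₃0 : 0 < q₃ := by linarith
  have e₁ := hsq hp₁ hq₁.le (mul_pos hq₂ hq₃0) h₁₂ h₁₃ h₂₃
  have e₂ := hsq (pj := p₁) (qj := q₁) hp₂ hq₂.le (mul_pos hq₁ hq₃0)
    (by linear_combination h₁₂) h₂₃ h₁₃
  have e₃ := hsq (pi := p₃) (pj := p₁) (pk := p₂) (qi := q₃) (qj := q₁) (qk := q₂)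
    (by linarith) hq₃0.le
    (mul_pos hq₁ hq₂) (by linear_combination h₁₃) (by linear_combination h₂₃) h₁₂
  have hs : √c = 1 := by linear_combination -(e₁ + e₂ + e₃) + hp₃ - √c * hq₃
  rw [hs, one_mul] at e₁ e₂
  exact ⟨e₁, e₂⟩

section Covariance

variable {μ : Measure Ω}

theorem MeasureTheory.memLp_indicator_one [IsFiniteMeasure μ] {A : Set Ω} (hA : MeasurableSet A)
    (p : ENNReal) : MemLp (A.indicator 1 : Ω → ℝ) p μ :=
  (memLp_const 1).indicator hA

theorem ProbabilityTheory.covariance_eq_zero_of_variance_eq_zero [IsFiniteMeasure μ]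
    {X : Ω → ℝ} (Y : Ω → ℝ) (hX : MemLp X 2 μ) (h : Var[X; μ] = 0) : cov[X, Y; μ] = 0 := by
  refine integral_eq_zero_of_ae ?_
  filter_upwards [ae_eq_integral_of_variance_eq_zero hX h] with ω hω
  simp [hω]

theorem ProbabilityTheory.covariance_indicator_one [IsProbabilityMeasure μ] {A B : Set Ω}
    (hA : MeasurableSet A) (hB : MeasurableSet B) :
    cov[A.indicator 1, B.indicator 1; μ] = μ.real (A ∩ B) - μ.real A * μ.real B := by
  rw [covariance_eq_sub (memLp_indicator_one hA 2) (memLp_indicator_one hB 2),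
    ← Set.inter_indicator_one, integral_indicator_one (hA.inter hB), integral_indicator_one hA,
    integral_indicator_one hB]

theorem ProbabilityTheory.covariance_smul_add_smul_add [IsFiniteMeasure μ] {U V U' V' : Ω → ℝ}
    (hU : MemLp U 2 μ) (hV : MemLp V 2 μ) (hU' : MemLp U' 2 μ) (hV' : MemLp V' 2 μ) (t : ℝ) :
    cov[t • U + V, t • U' + V'; μ] =
      t ^ 2 * cov[U, U'; μ] + t * (cov[U, V'; μ] + cov[V, U'; μ]) + cov[V, V'; μ] := by
  rw [covariance_add_left (hU.const_smul t) hV ((hU'.const_smul t).add hV'),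
    covariance_add_right (hU.const_smul t) (hU'.const_smul t) hV',
    covariance_add_right hV (hU'.const_smul t) hV']
  simp only [covariance_smul_left, covariance_smul_right]
  ring

theorem ProbabilityTheory.variance_smul_indicator_add_indicator [IsProbabilityMeasure μ]
    {A B : Set Ω} (hA : MeasurableSet A) (hB : MeasurableSet B) (hAB : Disjoint A B) (t : ℝ) :
    Var[t • A.indicator 1 + B.indicator 1; μ] =
      (μ.real A - μ.real A ^ 2) * t ^ 2 + -(2 * μ.real A * μ.real B) * t +
        (μ.real B - μ.real B ^ 2) := by
  have hA2 := memLp_indicator_one (μ := μ) hA 2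
  have hB2 := memLp_indicator_one (μ := μ) hB 2
  rw [← covariance_self ((hA2.const_smul t).add hB2).aemeasurable,
    covariance_smul_add_smul_add hA2 hB2 hA2 hB2, covariance_indicator_one hA hA,
    covariance_indicator_one hA hB, covariance_indicator_one hB hA, covariance_indicator_one hB hB,
    Set.inter_self, Set.inter_self, hAB.inter_eq, hAB.symm.inter_eq, measureReal_empty]
  ring

end Covariance

section InvariantCorrelation

variable {μ : Measure Ω} {X Y : Ω → ℝ} {r : ℝ}

theorem cov_eq_covariance_s8 : cov μ X Y = cov[X, Y; μ] := rfl

theorem IC.sq_cov_comp_eq [IsFiniteMeasure μ] (h : IC μ X Y r) {g : ℝ → ℝ} (hg : Measurable g)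
    (hgX : MemLp (g ∘ X) 2 μ) (hgY : MemLp (g ∘ Y) 2 μ) :
    cov μ (g ∘ X) (g ∘ Y) ^ 2 = r ^ 2 * (Var[g ∘ X; μ] * Var[g ∘ Y; μ]) := by
  rcases (variance_nonneg (g ∘ X) μ).eq_or_lt with hX0 | hXpos
  · rw [← hX0, cov_eq_covariance_s8, covariance_eq_zero_of_variance_eq_zero _ hgX hX0.symm]
    ring
  rcases (variance_nonneg (g ∘ Y) μ).eq_or_lt with hY0 | hYpos
  · rw [← hY0, cov_eq_covariance_s8, covariance_comm,
      covariance_eq_zero_of_variance_eq_zero _ hgY hY0.symm]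
    ring
  have hcorr := h.2 g ⟨hg, hgX, hgY, hXpos, hYpos⟩
  rw [corr, div_eq_iff (Real.sqrt_pos.mpr (mul_pos hXpos hYpos)).ne'] at hcorr
  rw [hcorr, mul_pow, Real.sq_sqrt (mul_pos hXpos hYpos).le]

end InvariantCorrelation

noncomputable def pairIndicator (a b t : ℝ) : ℝ → ℝ :=
  t • ({a} : Set ℝ).indicator 1 + ({b} : Set ℝ).indicator 1

section PairIndicator

variable {μ : Measure Ω} {a b t : ℝ}

theorem pairIndicator_comp {α : Type*} (X : α → ℝ) :
    pairIndicator a b t ∘ X = t • (X ⁻¹' {a}).indicator 1 + (X ⁻¹' {b}).indicator 1 := by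
  ext ω
  simp only [pairIndicator, Function.comp_apply, Pi.add_apply, Pi.smul_apply, Set.indicator,
    Set.mem_preimage, Set.mem_singleton_iff, Pi.one_apply]

theorem measurable_pairIndicator : Measurable (pairIndicator a b t) :=
  ((measurable_const.indicator (measurableSet_singleton a)).const_smul t).add
    (measurable_const.indicator (measurableSet_singleton b))

theorem memLp_pairIndicator_comp [IsFiniteMeasure μ] {X : Ω → ℝ} (hX : Measurable X) :
    MemLp (pairIndicator a b t ∘ X) 2 μ := by
  rw [pairIndicator_comp]
  exact ((memLp_indicator_one (hX (measurableSet_singleton a)) 2).const_smul t).add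
    (memLp_indicator_one (hX (measurableSet_singleton b)) 2)

theorem variance_pairIndicator_comp [IsProbabilityMeasure μ] {X : Ω → ℝ} (hX : Measurable X)
    (hab : a ≠ b) :
    Var[pairIndicator a b t ∘ X; μ] =
      (μ.real (X ⁻¹' {a}) - μ.real (X ⁻¹' {a}) ^ 2) * t ^ 2 +
        -(2 * μ.real (X ⁻¹' {a}) * μ.real (X ⁻¹' {b})) * t +
        (μ.real (X ⁻¹' {b}) - μ.real (X ⁻¹' {b}) ^ 2) := by
  rw [pairIndicator_comp, variance_smul_indicator_add_indicator (hX (measurableSet_singleton a))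
    (hX (measurableSet_singleton b)) ((Set.disjoint_singleton.mpr hab).preimage X)]

theorem variance_eq_zero_of_atom_coeffs_eq_zero [IsProbabilityMeasure μ] {X : Ω → ℝ}
    (hX : Measurable X) {x₁ x₂ x₃ : ℝ} (h12 : x₁ ≠ x₂) (h13 : x₁ ≠ x₃) (h23 : x₂ ≠ x₃)
    (hXS : ∀ᵐ ω ∂μ, X ω ∈ ({x₁, x₂, x₃} : Set ℝ))
    (h₁ : μ.real (X ⁻¹' {x₁}) - μ.real (X ⁻¹' {x₁}) ^ 2 = 0)
    (h₁₂ : μ.real (X ⁻¹' {x₁}) * μ.real (X ⁻¹' {x₂}) = 0)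
    (h₂ : μ.real (X ⁻¹' {x₂}) - μ.real (X ⁻¹' {x₂}) ^ 2 = 0) :
    Var[X; μ] = 0 := by
  set t₀ := (x₁ - x₃) / (x₂ - x₃)
  have hX' : X =ᵐ[μ] fun ω => x₃ + (x₂ - x₃) * (pairIndicator x₁ x₂ t₀ ∘ X) ω := by
    filter_upwards [hXS] with ω hω
    simp only [Set.mem_insert_iff, Set.mem_singleton_iff] at hω
    rcases hω with h | h | h <;>
      simp only [t₀, Function.comp_apply, pairIndicator, Pi.add_apply, Pi.smul_apply, smul_eq_mul,
        Set.indicator_apply, Set.mem_singleton_iff, Pi.one_apply, h, h12, h12.symm, h13.symm,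
        h23.symm, if_true, if_false] <;>
      field_simp <;> ring
  rw [variance_congr hX',
    variance_const_add ((measurable_pairIndicator.comp hX).aestronglyMeasurable.const_mul _),
    variance_const_mul, variance_pairIndicator_comp hX h12]
  linear_combination (x₂ - x₃) ^ 2 * (t₀ ^ 2 * h₁ - 2 * t₀ * h₁₂ + h₂)

theorem IC.exists_atom_coeffs_eq_mul [IsProbabilityMeasure μ] {X Y : Ω → ℝ} {r : ℝ}
    (h : IC μ X Y r) (hr : r ≠ 0) (hX : Measurable X) (hY : Measurable Y) (hab : a ≠ b)
    (hqa : 0 < μ.real (Y ⁻¹' {a})) (hqb : 0 < μ.real (Y ⁻¹' {b}))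
    (hq : μ.real (Y ⁻¹' {a}) + μ.real (Y ⁻¹' {b}) < 1) :
    ∃ c, μ.real (X ⁻¹' {a}) - μ.real (X ⁻¹' {a}) ^ 2 =
        c * (μ.real (Y ⁻¹' {a}) - μ.real (Y ⁻¹' {a}) ^ 2) ∧
      μ.real (X ⁻¹' {a}) * μ.real (X ⁻¹' {b}) = c * (μ.real (Y ⁻¹' {a}) * μ.real (Y ⁻¹' {b})) ∧
      μ.real (X ⁻¹' {b}) - μ.real (X ⁻¹' {b}) ^ 2 =
        c * (μ.real (Y ⁻¹' {b}) - μ.real (Y ⁻¹' {b}) ^ 2) := by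
  set pa := μ.real (X ⁻¹' {a})
  set pb := μ.real (X ⁻¹' {b})
  set qa := μ.real (Y ⁻¹' {a})
  set qb := μ.real (Y ⁻¹' {b})
  have hA : ∀ Z : Ω → ℝ, Measurable Z → MemLp ((Z ⁻¹' {a}).indicator 1) 2 μ :=
    fun Z hZ => memLp_indicator_one (hZ (measurableSet_singleton a)) 2
  have hB : ∀ Z : Ω → ℝ, Measurable Z → MemLp ((Z ⁻¹' {b}).indicator 1) 2 μ :=
    fun Z hZ => memLp_indicator_one (hZ (measurableSet_singleton b)) 2
  set F₂ := cov[(X ⁻¹' {a}).indicator 1, (Y ⁻¹' {a}).indicator 1; μ]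
  set F₁ := cov[(X ⁻¹' {a}).indicator 1, (Y ⁻¹' {b}).indicator 1; μ] +
    cov[(X ⁻¹' {b}).indicator 1, (Y ⁻¹' {a}).indicator 1; μ]
  set F₀ := cov[(X ⁻¹' {b}).indicator 1, (Y ⁻¹' {b}).indicator 1; μ]
  have hsq : ∀ t, (F₂ / r * t ^ 2 + F₁ / r * t + F₀ / r) ^ 2 =
      ((pa - pa ^ 2) * t ^ 2 + -(2 * pa * pb) * t + (pb - pb ^ 2)) *
        ((qa - qa ^ 2) * t ^ 2 + -(2 * qa * qb) * t + (qb - qb ^ 2)) := by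
    intro t
    have key := h.sq_cov_comp_eq (measurable_pairIndicator (a := a) (b := b) (t := t))
      (memLp_pairIndicator_comp hX) (memLp_pairIndicator_comp hY)
    rw [variance_pairIndicator_comp hX hab, variance_pairIndicator_comp hY hab, cov_eq_covariance_s8,
      pairIndicator_comp, pairIndicator_comp,
      covariance_smul_add_smul_add (hA X hX) (hB X hX) (hA Y hY) (hB Y hY)] at key
    field_simp
    linear_combination key
  have hqpos : ∀ t, 0 < (qa - qa ^ 2) * t ^ 2 + -(2 * qa * qb) * t + (qb - qb ^ 2) := by
    intro t
    have e : (qa - qa ^ 2) * t ^ 2 + -(2 * qa * qb) * t + (qb - qb ^ 2) =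
        qa * qb * (t - 1) ^ 2 + (1 - qa - qb) * (qa * t ^ 2 + qb) := by ring
    rw [e]
    have : 0 < (1 - qa - qb) * (qa * t ^ 2 + qb) := by
      apply mul_pos <;> nlinarith
    positivity
  obtain ⟨c, h₂, h₁, h₀⟩ :=
    exists_coeffs_eq_mul_of_sq_eq_mul (by nlinarith : 0 < qa - qa ^ 2).ne' hqpos hsq
  exact ⟨c, h₂, by linarith, h₀⟩

end PairIndicator

section FiniteSupport

variable {μ : Measure Ω} {α : Type*} [MeasurableSpace α] [MeasurableSingletonClass α]

theorem sum_measureReal_preimage_singleton_eq_one [IsProbabilityMeasure μ] {X : Ω → α}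
    (hX : Measurable X) {S : Finset α} (hS : μ (X ⁻¹' S) = 1) :
    ∑ a ∈ S, μ.real (X ⁻¹' {a}) = 1 := by
  rw [sum_measureReal_preimage_singleton S fun a _ => hX (measurableSet_singleton a),
    measureReal_def, hS, ENNReal.toReal_one]

theorem map_eq_map_of_measureReal_preimage_singleton_eq [IsProbabilityMeasure μ] {X Y : Ω → α}
    (hX : Measurable X) (hY : Measurable Y) {S : Finset α} (hXS : μ (X ⁻¹' S) = 1)
    (hYS : μ (Y ⁻¹' S) = 1) (h : ∀ a ∈ S, μ.real (X ⁻¹' {a}) = μ.real (Y ⁻¹' {a})) :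
    μ.map X = μ.map Y := by
  classical
  have hpre : ∀ {Z : Ω → α}, Measurable Z → μ (Z ⁻¹' S) = 1 → ∀ s, MeasurableSet s →
      μ (Z ⁻¹' s) = ∑ a ∈ S.filter (· ∈ s), μ (Z ⁻¹' {a}) := by
    intro Z hZ hZS s hs
    rw [sum_measure_preimage_singleton _ fun a _ => hZ (measurableSet_singleton a),
      ← measure_inter_conull ((prob_compl_eq_zero_iff (hZ S.measurableSet)).mpr hZS),
      Finset.coe_filter, ← Set.preimage_inter]
    congr 2
    ext x
    simp [and_comm]
  ext s hs
  rw [Measure.map_apply hX hs, Measure.map_apply hY hs, hpre hX hXS s hs, hpre hY hYS s hs]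
  refine Finset.sum_congr rfl fun a ha => ?_
  exact (measureReal_eq_measureReal_iff).mp (h a (Finset.mem_filter.mp ha).1)

end FiniteSupport

/-- Let `x₁ < x₂ < x₃`, let `Y` take each value `x₁, x₂, x₃` with positive
probability and `P(Y ∈ {x₁,x₂,x₃}) = 1`, and let `X` satisfy `P(X ∈ {x₁,x₂,x₃}) = 1`. If
`(X,Y) ∈ IC`, then `X` and `Y` have the same distribution or `Corr(X,Y) = 0`. -/
theorem ic_triatomic_same_support_subset
    (μ : Measure Ω) [IsProbabilityMeasure μ] (X Y : Ω → ℝ)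
    (hXm : Measurable X) (hYm : Measurable Y)
    (x₁ x₂ x₃ : ℝ) (h12 : x₁ < x₂) (h23 : x₂ < x₃)
    (hY1 : 0 < μ {ω | Y ω = x₁}) (hY2 : 0 < μ {ω | Y ω = x₂}) (hY3 : 0 < μ {ω | Y ω = x₃})
    (hYsupp : μ {ω | Y ω ∈ ({x₁, x₂, x₃} : Set ℝ)} = 1)
    (hXsupp : μ {ω | X ω ∈ ({x₁, x₂, x₃} : Set ℝ)} = 1)
    (hIC : ∃ r ∈ Set.Icc (-1 : ℝ) 1, IC μ X Y r) :
    Measure.map X μ = Measure.map Y μ ∨ corr μ X Y = 0 := by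
  obtain ⟨r, -, hr⟩ := hIC
  rcases eq_or_ne r 0 with rfl | hr0
  · exact Or.inr hr.1
  left
  have h13 : x₁ ≠ x₃ := (h12.trans h23).ne
  have hXS : μ (X ⁻¹' ↑({x₁, x₂, x₃} : Finset ℝ)) = 1 := by push_cast; exact hXsupp
  have hYS : μ (Y ⁻¹' ↑({x₁, x₂, x₃} : Finset ℝ)) = 1 := by push_cast; exact hYsupp
  have hpsum := sum_measureReal_preimage_singleton_eq_one hXm hXS
  have hqsum := sum_measureReal_preimage_singleton_eq_one hYm hYS
  simp only [Finset.sum_insert, Finset.mem_insert, Finset.mem_singleton, h12.ne, h13,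
    h23.ne, or_self, not_false_eq_true, Finset.sum_singleton] at hpsum hqsum
  have hq : ∀ x, 0 < μ {ω | Y ω = x} → 0 < μ.real (Y ⁻¹' {x}) :=
    fun x hx => ENNReal.toReal_pos hx.ne' (measure_ne_top μ _)
  have hq₃ := hq x₃ hY3
  obtain ⟨c, h₁, h₁₂, h₂⟩ := hr.exists_atom_coeffs_eq_mul hr0 hXm hYm h12.ne (hq x₁ hY1)
    (hq x₂ hY2) (by linarith)
  have hc : c ≠ 0 := by
    rintro rfl
    rw [zero_mul] at h₁ h₁₂ h₂
    have hvar := variance_eq_zero_of_atom_coeffs_eq_zero hXm h12.ne h13 h23.ne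
      ((mem_ae_iff_prob_eq_one (hXm (by measurability))).mpr hXsupp) h₁ h₁₂ h₂
    exact hr0 (by rw [← hr.1, corr, hvar, zero_mul, Real.sqrt_zero, div_zero])
  obtain ⟨e₁, e₂⟩ := eq_of_atom_coeffs_eq_mul measureReal_nonneg measureReal_nonneg
    (by linarith [measureReal_nonneg (μ := μ) (s := X ⁻¹' {x₃})]) (hq x₁ hY1) (hq x₂ hY2)
    (by linarith) hc h₁ h₁₂ h₂
  refine map_eq_map_of_measureReal_preimage_singleton_eq hXm hYm hXS hYS ?_
  simp only [Finset.mem_insert, Finset.mem_singleton]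
  rintro a (rfl | rfl | rfl) <;> linarith
end
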